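/- Reducibility of β-redexes formed from abstractions: if [] ⊢ abs A M : arr A B, V is strongly normalizing, M[0 := const] is strongly normalizing, Red V A, and Red (M[0 := U]) B for every U with Red U A, then Red (app (abs A M) V) B. -/

import Mathlib

inductive Ty : Type
  | iota : Ty
  | arr : Ty → Ty → Ty

inductive Tm : Type
  | var : ℕ → Tm
  | const : Tm
  | app : Tm → Tm → Tm
  | abs : Ty → Tm → Tm

def liftRen (ρ : ℕ → ℕ) : ℕ → ℕ
  | 0 => 0
  | n + 1 => ρ n + 1

def rename (ρ : ℕ → ℕ) : Tm → Tm
  | Tm.var n => Tm.var (ρ n)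
  | Tm.const => Tm.const
  | Tm.app m n => Tm.app (rename ρ m) (rename ρ n)
  | Tm.abs a r => Tm.abs a (rename (liftRen ρ) r)

def liftSub (σ : ℕ → Tm) : ℕ → Tm
  | 0 => Tm.var 0
  | n + 1 => rename Nat.succ (σ n)

/-- Simultaneous capture-avoiding substitution. -/
def subst (σ : ℕ → Tm) : Tm → Tm
  | Tm.var n => σ n
  | Tm.const => Tm.const
  | Tm.app m n => Tm.app (subst σ m) (subst σ n)
  | Tm.abs a r => Tm.abs a (subst (liftSub σ) r)

/-- `subst0 s t` is `t[0 := s]`. -/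
def subst0 (s : Tm) (t : Tm) : Tm :=
  subst (fun n => match n with | 0 => s | Nat.succ k => Tm.var k) t

inductive Typed : List Ty → Tm → Ty → Prop
  | var {Γ : List Ty} {n : ℕ} {a : Ty} :
      Γ[n]? = some a → Typed Γ (Tm.var n) a
  | const {Γ : List Ty} {a : Ty} : Typed Γ Tm.const a
  | app {Γ : List Ty} {m n : Tm} {a b : Ty} :
      Typed Γ m (Ty.arr a b) → Typed Γ n a → Typed Γ (Tm.app m n) b
  | abs {Γ : List Ty} {r : Tm} {a b : Ty} :
      Typed (a :: Γ) r b → Typed Γ (Tm.abs a r) (Ty.arr a b)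

/-- One-step (β) reduction. -/
inductive Step : Tm → Tm → Prop
  | beta {a : Ty} {r m : Tm} : Step (Tm.app (Tm.abs a r) m) (subst0 m r)
  | appl {m m' n : Tm} : Step m m' → Step (Tm.app m n) (Tm.app m' n)
  | appr {m n n' : Tm} : Step n n' → Step (Tm.app m n) (Tm.app m n')
  | abs {a : Ty} {r r' : Tm} : Step r r' → Step (Tm.abs a r) (Tm.abs a r')

/-- Strong normalization. -/
inductive SN : Tm → Prop
  | intro {M : Tm} : (∀ M', Step M M' → SN M') → SN M

/-- Tait-style reducibility, by recursion on the type. -/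
def Red : Tm → Ty → Prop
  | M, Ty.iota => Typed [] M Ty.iota ∧ SN M
  | M, Ty.arr a b => Typed [] M (Ty.arr a b) ∧ ∀ U, Red U a → Red (Tm.app M U) b

/-
The redex `(λ M) V` is neutral, so by the Girard–Tait property CR3 it is reducible once all its
one-step reducts are. These are the contractum, reducible by hypothesis, and redexes with a reduced
body or argument, handled by a double induction on the strong normalization of `M` and `V`,
reducibility being closed under reduction (CR2). Both `V` and `M` are strongly normalizing by CR1:
`V` is reducible, and so is `M[0 := const]`, the constant being reducible at every type.
-/

theorem liftRen_comp (ρ ρ' : ℕ → ℕ) : liftRen ρ ∘ liftRen ρ' = liftRen (ρ ∘ ρ') := by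
  funext n; cases n <;> rfl

theorem rename_rename (ρ ρ' : ℕ → ℕ) (t : Tm) :
    rename ρ (rename ρ' t) = rename (ρ ∘ ρ') t := by
  induction t generalizing ρ ρ' with
  | var n => rfl
  | const => rfl
  | app m n ihm ihn => simp only [rename, ihm, ihn]
  | abs a r ih => simp only [rename, ih, liftRen_comp]

theorem liftSub_comp_liftRen (σ : ℕ → Tm) (ρ : ℕ → ℕ) :
    liftSub σ ∘ liftRen ρ = liftSub (σ ∘ ρ) := by
  funext n; cases n <;> rfl

theorem subst_rename (σ : ℕ → Tm) (ρ : ℕ → ℕ) (t : Tm) :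
    subst σ (rename ρ t) = subst (σ ∘ ρ) t := by
  induction t generalizing σ ρ with
  | var n => rfl
  | const => rfl
  | app m n ihm ihn => simp only [rename, subst, ihm, ihn]
  | abs a r ih => simp only [rename, subst, ih, liftSub_comp_liftRen]

theorem rename_liftSub (ρ : ℕ → ℕ) (σ : ℕ → Tm) (n : ℕ) :
    rename (liftRen ρ) (liftSub σ n) = liftSub (fun k => rename ρ (σ k)) n := by
  cases n with
  | zero => rfl
  | succ k => simp only [liftSub, rename_rename]; rfl

theorem rename_subst (ρ : ℕ → ℕ) (σ : ℕ → Tm) (t : Tm) :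
    rename ρ (subst σ t) = subst (fun n => rename ρ (σ n)) t := by
  induction t generalizing σ ρ with
  | var n => rfl
  | const => rfl
  | app m n ihm ihn => simp only [rename, subst, ihm, ihn]
  | abs a r ih => simp only [rename, subst, ih, rename_liftSub]

theorem subst_liftSub (σ τ : ℕ → Tm) (n : ℕ) :
    subst (liftSub σ) (liftSub τ n) = liftSub (fun k => subst σ (τ k)) n := by
  cases n with
  | zero => rfl
  | succ k => simp only [liftSub, subst_rename, rename_subst]; rfl

theorem subst_subst (σ τ : ℕ → Tm) (t : Tm) :
    subst σ (subst τ t) = subst (fun n => subst σ (τ n)) t := by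
  induction t generalizing σ τ with
  | var n => rfl
  | const => rfl
  | app m n ihm ihn => simp only [subst, ihm, ihn]
  | abs a r ih => simp only [subst, ih, subst_liftSub]

theorem liftSub_var : liftSub Tm.var = Tm.var := by
  funext n; cases n <;> rfl

theorem subst_var (t : Tm) : subst Tm.var t = t := by
  induction t with
  | var n => rfl
  | const => rfl
  | app m n ihm ihn => simp only [subst, ihm, ihn]
  | abs a r ih => simp only [subst, liftSub_var, ih]

theorem subst_subst0 (σ : ℕ → Tm) (m r : Tm) :
    subst σ (subst0 m r) = subst0 (subst σ m) (subst (liftSub σ) r) := by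
  unfold subst0
  rw [subst_subst, subst_subst]
  congr 1
  funext n
  cases n with
  | zero => rfl
  | succ k =>
    show σ k = subst _ (rename Nat.succ (σ k))
    rw [subst_rename]
    exact (subst_var (σ k)).symm

theorem Step.subst (σ : ℕ → Tm) {t t' : Tm} (h : Step t t') :
    Step (subst σ t) (subst σ t') := by
  induction h generalizing σ with
  | beta => rw [subst_subst0]; exact Step.beta
  | appl _ ih => exact Step.appl (ih σ)
  | appr _ ih => exact Step.appr (ih σ)
  | abs _ ih => exact Step.abs (ih (liftSub σ))

theorem SN.of_step {t t' : Tm} (h : SN t) (hs : Step t t') : SN t' := by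
  cases h with
  | intro h => exact h t' hs

theorem SN.of_map {f : Tm → Tm} (hf : ∀ {t t'}, Step t t' → Step (f t) (f t')) {t : Tm}
    (h : SN (f t)) : SN t := by
  generalize hs : f t = s at h
  induction h generalizing t with
  | intro _ ih => exact SN.intro fun t' ht' => ih _ (hs ▸ hf ht') rfl

theorem SN.of_subst (σ : ℕ → Tm) {t : Tm} (h : SN (subst σ t)) : SN t :=
  SN.of_map (Step.subst σ) h

theorem SN.of_app_left {m n : Tm} (h : SN (Tm.app m n)) : SN m :=
  SN.of_map (f := fun m => Tm.app m n) Step.appl h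

theorem Typed.rename {Γ Δ : List Ty} {ρ : ℕ → ℕ} {t : Tm} {a : Ty}
    (ht : Typed Γ t a) (hρ : ∀ n b, Γ[n]? = some b → Δ[ρ n]? = some b) :
    Typed Δ (rename ρ t) a := by
  induction ht generalizing Δ ρ with
  | var h => exact Typed.var (hρ _ _ h)
  | const => exact Typed.const
  | app _ _ ihm ihn => exact Typed.app (ihm hρ) (ihn hρ)
  | abs _ ih =>
    refine Typed.abs (ih ?_)
    rintro (_ | n) c hc
    · exact hc
    · exact hρ n c hc

theorem Typed.subst {Γ Δ : List Ty} {σ : ℕ → Tm} {t : Tm} {a : Ty}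
    (ht : Typed Γ t a) (hσ : ∀ n b, Γ[n]? = some b → Typed Δ (σ n) b) :
    Typed Δ (subst σ t) a := by
  induction ht generalizing Δ σ with
  | var h => exact hσ _ _ h
  | const => exact Typed.const
  | app _ _ ihm ihn => exact Typed.app (ihm hσ) (ihn hσ)
  | abs _ ih =>
    refine Typed.abs (ih ?_)
    rintro (_ | n) c hc
    · exact Typed.var hc
    · exact (hσ n c hc).rename fun _ _ h => h

theorem Typed.subst0 {Γ : List Ty} {r m : Tm} {a b : Ty}
    (hr : Typed (a :: Γ) r b) (hm : Typed Γ m a) : Typed Γ (subst0 m r) b := by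
  refine hr.subst ?_
  rintro (_ | n) c hc
  · cases hc; exact hm
  · exact Typed.var hc

theorem Typed.of_step {Γ : List Ty} {t t' : Tm} {a : Ty}
    (ht : Typed Γ t a) (hs : Step t t') : Typed Γ t' a := by
  induction hs generalizing Γ a with
  | beta =>
    obtain _ | _ | ⟨⟨⟩ | ⟨⟩ | ⟨⟩ | hr, hm⟩ := ht
    exact hr.subst0 hm
  | appl _ ih =>
    obtain _ | _ | ⟨hm, hn⟩ := ht
    exact Typed.app (ih hm) hn
  | appr _ ih =>
    obtain _ | _ | ⟨hm, hn⟩ := ht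
    exact Typed.app hm (ih hn)
  | abs _ ih =>
    obtain _ | _ | _ | hr := ht
    exact Typed.abs (ih hr)

def Neutral (M : Tm) : Prop := ∀ a r, M ≠ Tm.abs a r

theorem Red.typed {M : Tm} {a : Ty} (h : Red M a) : Typed [] M a := by
  cases a with
  | iota => exact h.1
  | arr => exact h.1

theorem Red.of_step {M M' : Tm} {a : Ty} (h : Red M a) (hs : Step M M') : Red M' a := by
  induction a generalizing M M' with
  | iota => exact ⟨h.1.of_step hs, h.2.of_step hs⟩
  | arr a b _ ihb => exact ⟨h.1.of_step hs, fun U hU => ihb (h.2 U hU) (Step.appl hs)⟩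

/-- Induction on `SN U`: as `M` is neutral, a reduct of `M U` is `M' U` with `M → M'`,
or `M U'` with `U → U'`. -/
theorem red_app_of_neutral {a b : Ty}
    (hb : ∀ N, Typed [] N b → Neutral N → (∀ N', Step N N' → Red N' b) → Red N b)
    {M : Tm} (hM : Typed [] M (Ty.arr a b)) (hne : Neutral M)
    (hred : ∀ M', Step M M' → Red M' (Ty.arr a b)) {U : Tm} (hU : SN U) (hrU : Red U a) :
    Red (Tm.app M U) b := by
  induction hU with
  | intro _ ihU =>
    refine hb _ (Typed.app hM hrU.typed) (fun _ _ h => Tm.noConfusion h) ?_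
    intro N hs
    cases hs with
    | beta => exact absurd rfl (hne _ _)
    | appl hs => exact (hred _ hs).2 _ hrU
    | appr hs => exact ihU _ hs (hrU.of_step hs)

theorem red_sn_and_red_of_neutral (a : Ty) :
    (∀ M, Red M a → SN M) ∧
      ∀ M, Typed [] M a → Neutral M → (∀ M', Step M M' → Red M' a) → Red M a := by
  induction a with
  | iota => exact ⟨fun _ h => h.2, fun _ ht _ hred => ⟨ht, SN.intro fun M' hs => (hred M' hs).2⟩⟩
  | arr a b iha ihb =>
    have hconst : Red Tm.const a :=
      iha.2 _ Typed.const (fun _ _ h => Tm.noConfusion h) (fun _ hs => nomatch hs)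
    refine ⟨fun M h => SN.of_app_left (ihb.1 _ (h.2 _ hconst)), fun M ht hne hred => ?_⟩
    exact ⟨ht, fun U hU => red_app_of_neutral ihb.2 ht hne hred (iha.1 U hU) hU⟩

theorem Red.sn {M : Tm} {a : Ty} (h : Red M a) : SN M :=
  (red_sn_and_red_of_neutral a).1 M h

theorem Red.of_neutral {M : Tm} {a : Ty} (ht : Typed [] M a) (hne : Neutral M)
    (hred : ∀ M', Step M M' → Red M' a) : Red M a :=
  (red_sn_and_red_of_neutral a).2 M ht hne hred

theorem red_const (a : Ty) : Red Tm.const a :=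
  Red.of_neutral Typed.const (fun _ _ h => Tm.noConfusion h) fun _ hs => nomatch hs

theorem red_app_abs {A B : Ty} {M V : Tm} (hM : SN M) (hV : SN V)
    (ht : Typed [] (Tm.abs A M) (Ty.arr A B)) (hrV : Red V A)
    (h : ∀ U, Red U A → Red (subst0 U M) B) : Red (Tm.app (Tm.abs A M) V) B := by
  induction hM generalizing V with
  | intro _ ihM =>
    induction hV with
    | intro hVs ihV =>
      refine Red.of_neutral (Typed.app ht hrV.typed) (fun _ _ h => Tm.noConfusion h) ?_
      intro N hs
      cases hs with
      | beta => exact h _ hrV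
      | appl hs =>
        obtain _ | _ | _ | hs := hs
        exact ihM _ hs (SN.intro hVs) (ht.of_step (Step.abs hs)) hrV
          fun U hU => (h U hU).of_step (hs.subst _)
      | appr hs => exact ihV _ hs (hrV.of_step hs)

theorem red_beta_general {M V : Tm} {A B : Ty}
    (ht : Typed [] (Tm.abs A M) (Ty.arr A B))
    (hrV : Red V A)
    (h : ∀ U, Red U A → Red (subst0 U M) B) :
    Red (Tm.app (Tm.abs A M) V) B :=
  red_app_abs (SN.of_subst _ (h _ (red_const A)).sn) hrV.sn ht hrV h

theorem red_beta {M V : Tm} {A B : Ty}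
    (ht : Typed [] (Tm.abs A M) (Ty.arr A B))
    (hV : SN V) (hMc : SN (subst0 Tm.const M)) (hrV : Red V A)
    (h : ∀ U, Red U A → Red (subst0 U M) B) :
    Red (Tm.app (Tm.abs A M) V) B :=
  red_beta_general ht hrV h
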